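/- Suppose P is a monotone Markov kernel on S, S contains at least two distinct points, and any two points of S have a lower bound in S. Then the contraction coefficient in the bound γ(μP, νP) ≤ (1 − σ(P))γ(μ, ν) cannot be improved: for every ξ > σ(P) there exist Borel probability measures μ and ν on S such that γ(μP, νP) > (1 − ξ) · γ(μ, ν). -/

import Mathlib

open MeasureTheory

noncomputable section

/-- `μ` is stochastically dominated by `ν`: equal total mass and `μ I ≤ ν I`
for every increasing (upper) Borel set `I`. -/
def StochDom {α : Type*} [MeasurableSpace α] [Preorder α] (μ ν : Measure α) : Prop :=
  μ Set.univ = ν Set.univ ∧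
    ∀ I : Set α, MeasurableSet I → IsUpperSet I → μ I ≤ ν I

/-- `(μ', ν')` is an ordered component pair for `(μ, ν)`. -/
def IsOCP {α : Type*} [MeasurableSpace α] [Preorder α] (μ ν μ' ν' : Measure α) : Prop :=
  μ' ≤ μ ∧ ν' ≤ ν ∧ StochDom μ' ν'

/-- The ordered affinity `α_O(μ, ν)`: supremum of the mass `μ'(S)` over all
ordered component pairs `(μ', ν')` for `(μ, ν)`. -/
def alphaO {α : Type*} [MeasurableSpace α] [Preorder α] (μ ν : Measure α) : ℝ :=
  sSup {r : ℝ | ∃ μ' ν' : Measure α, IsOCP μ ν μ' ν' ∧ r = (μ' Set.univ).toReal}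

/-- The total ordered variation distance `γ(μ, ν) = 2 - α_O(μ, ν) - α_O(ν, μ)`. -/
def gammaO {α : Type*} [MeasurableSpace α] [Preorder α] (μ ν : Measure α) : ℝ :=
  2 - alphaO μ ν - alphaO ν μ

variable {S : Type*} [TopologicalSpace S] [PolishSpace S] [MeasurableSpace S]
  [BorelSpace S] [PartialOrder S] [OrderClosedTopology S] [Nonempty S]

section Basics

variable {α : Type*} [MeasurableSpace α] [Preorder α] {μ ν : Measure α}

lemma stochDom_refl (μ : Measure α) : StochDom μ μ := ⟨rfl, fun _ _ _ => le_rfl⟩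

lemma ocpSet_nonempty (μ ν : Measure α) :
    {r : ℝ | ∃ μ' ν' : Measure α, IsOCP μ ν μ' ν' ∧ r = (μ' Set.univ).toReal}.Nonempty := by
  refine ⟨0, 0, 0, ⟨Measure.zero_le μ, Measure.zero_le ν, stochDom_refl 0⟩, by simp⟩

lemma ocpSet_bddAbove [IsFiniteMeasure μ] (ν : Measure α) :
    BddAbove {r : ℝ | ∃ μ' ν' : Measure α, IsOCP μ ν μ' ν' ∧ r = (μ' Set.univ).toReal} := by
  refine ⟨(μ Set.univ).toReal, fun r hr => ?_⟩
  obtain ⟨μ', ν', h, rfl⟩ := hr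
  exact ENNReal.toReal_mono (measure_ne_top μ _) (h.1 Set.univ)

lemma alphaO_nonneg [IsFiniteMeasure μ] (ν : Measure α) : 0 ≤ alphaO μ ν := by
  refine le_csSup (ocpSet_bddAbove ν) ?_
  exact ⟨0, 0, ⟨Measure.zero_le μ, Measure.zero_le ν, stochDom_refl 0⟩, by simp⟩

lemma alphaO_le [IsFiniteMeasure μ] (ν : Measure α) : alphaO μ ν ≤ (μ Set.univ).toReal := by
  refine csSup_le (ocpSet_nonempty μ ν) ?_
  rintro r ⟨μ', ν', h, rfl⟩
  exact ENNReal.toReal_mono (measure_ne_top μ _) (h.1 Set.univ)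

lemma alphaO_le_one [IsProbabilityMeasure μ] (ν : Measure α) : alphaO μ ν ≤ 1 := by
  have := alphaO_le (μ := μ) ν
  simpa using this

lemma alphaO_eq_one_of_stochDom [IsProbabilityMeasure μ] [IsProbabilityMeasure ν]
    (h : StochDom μ ν) : alphaO μ ν = 1 := by
  refine le_antisymm (alphaO_le_one ν) ?_
  have : (1 : ℝ) ∈ {r : ℝ | ∃ μ' ν' : Measure α, IsOCP μ ν μ' ν' ∧ r = (μ' Set.univ).toReal} :=
    ⟨μ, ν, ⟨le_rfl, le_rfl, h⟩, by simp⟩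
  exact le_csSup (ocpSet_bddAbove ν) this

lemma alphaO_le_of_upperSet [IsFiniteMeasure μ] [IsFiniteMeasure ν] {I : Set α}
    (hmI : MeasurableSet I) (hI : IsUpperSet I) :
    alphaO μ ν ≤ (ν I).toReal + (μ Iᶜ).toReal := by
  refine csSup_le (ocpSet_nonempty μ ν) ?_
  rintro r ⟨μ', ν', ⟨h1, h2, hmass, hdom⟩, rfl⟩
  have hμ'fin : μ' Set.univ ≠ ⊤ := fun h => by
    have := h1 Set.univ; rw [h] at this; exact (measure_ne_top μ _) (top_le_iff.mp this)
  have key : μ' Set.univ ≤ ν I + μ Iᶜ := by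
    calc μ' Set.univ = μ' (I ∪ Iᶜ) := by rw [Set.union_compl_self]
    _ ≤ μ' I + μ' Iᶜ := measure_union_le _ _
    _ ≤ ν' I + μ' Iᶜ := add_le_add (hdom I hmI hI) le_rfl
    _ ≤ ν I + μ Iᶜ := by gcongr
  calc (μ' Set.univ).toReal ≤ (ν I + μ Iᶜ).toReal :=
        ENNReal.toReal_mono (by finiteness) key
  _ = (ν I).toReal + (μ Iᶜ).toReal := ENNReal.toReal_add (measure_ne_top _ _) (measure_ne_top _ _)

lemma alphaO_mono_right {ρ τ : Measure α} [IsFiniteMeasure μ]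
    (h : ∀ ν' : Measure α, ν' ≤ ρ → ∀ μ' : Measure α, StochDom μ' ν' →
      ∃ τ' : Measure α, τ' ≤ τ ∧ StochDom μ' τ') :
    alphaO μ ρ ≤ alphaO μ τ := by
  refine csSup_le (ocpSet_nonempty μ ρ) ?_
  rintro r ⟨μ', ν', ⟨h1, h2, h3⟩, rfl⟩
  obtain ⟨τ', hτ', hdom⟩ := h ν' h2 μ' h3
  exact le_csSup (ocpSet_bddAbove τ) ⟨μ', τ', ⟨h1, hτ', hdom⟩, rfl⟩

end Basics



open Finset

section FiniteNat

open scoped Classical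

variable {V : Type*} [Fintype V] [Preorder V] [DecidableEq V]

noncomputable def upSet (B : Finset V) : Finset V :=
  Finset.univ.filter (fun w => ∃ v ∈ B, v ≤ w)

lemma mem_upSet {B : Finset V} {w : V} : w ∈ upSet B ↔ ∃ v ∈ B, v ≤ w := by
  simp [upSet]

omit [DecidableEq V] in
lemma subset_upSet (B : Finset V) : B ⊆ upSet B := by
  intro v hv; exact mem_upSet.mpr ⟨v, hv, le_rfl⟩

omit [DecidableEq V] in
lemma mem_upSet_of_le {B : Finset V} {v w : V} (hv : v ∈ upSet B) (h : v ≤ w) : w ∈ upSet B := by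
  obtain ⟨u, hu, hle⟩ := mem_upSet.mp hv; exact mem_upSet.mpr ⟨u, hu, hle.trans h⟩

omit [DecidableEq V] in
lemma upSet_idem (B : Finset V) : upSet (upSet B) = upSet B := by
  apply Finset.Subset.antisymm _ (subset_upSet _)
  intro w hw
  obtain ⟨v, hv, hle⟩ := mem_upSet.mp hw
  exact mem_upSet_of_le hv hle

lemma upSet_union (B C : Finset V) : upSet (B ∪ C) = upSet B ∪ upSet C := by
  ext w
  constructor
  · intro hw
    obtain ⟨v, hv, hle⟩ := mem_upSet.mp hw
    rcases Finset.mem_union.mp hv with h | h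
    · exact Finset.mem_union_left _ (mem_upSet.mpr ⟨v, h, hle⟩)
    · exact Finset.mem_union_right _ (mem_upSet.mpr ⟨v, h, hle⟩)
  · intro hw
    rcases Finset.mem_union.mp hw with h | h
    · obtain ⟨v, hv, hle⟩ := mem_upSet.mp h
      exact mem_upSet.mpr ⟨v, Finset.mem_union_left _ hv, hle⟩
    · obtain ⟨v, hv, hle⟩ := mem_upSet.mp h
      exact mem_upSet.mpr ⟨v, Finset.mem_union_right _ hv, hle⟩

omit [DecidableEq V] in
lemma upSet_eq_self_of_upper {U : Finset V} (h : upSet U = U) {v w : V}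
    (hv : v ∈ U) (hle : v ≤ w) : w ∈ U := by
  rw [← h]; exact mem_upSet_of_le (subset_upSet U hv) hle

lemma sum_split (f : V → ℕ) {B : Finset V} {c : V} (h : c ∈ B) :
    ∑ v ∈ B \ {c}, f v + f c = ∑ v ∈ B, f v := by
  rw [← Finset.erase_eq]; exact Finset.sum_erase_add _ _ h

lemma sum_update_eq (f : V → ℕ) {B : Finset V} {c : V} (k : ℕ) (h : c ∈ B) :
    ∑ v ∈ B, Function.update f c k v = k + ∑ v ∈ B \ {c}, f v := by
  rw [Finset.sum_update_of_mem h]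

lemma sum_update_eq' (f : V → ℕ) {B : Finset V} {c : V} (k : ℕ) (h : c ∉ B) :
    ∑ v ∈ B, Function.update f c k v = ∑ v ∈ B, f v :=
  Finset.sum_congr rfl (fun v hv => Function.update_of_ne (fun hvc => h (by rw [← hvc]; exact hv)) _ _)

/-- The finite ℕ-valued transport lemma (Hall-type, by induction on total demand). -/
theorem natTransport (ν τ : V → ℕ)
    (h : ∀ B : Finset V, ∑ v ∈ B, ν v ≤ ∑ w ∈ upSet B, τ w) :
    ∃ t : V → ℕ, (∀ v, t v ≤ τ v) ∧ (∑ v, t v = ∑ v, ν v) ∧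
      ∀ B : Finset V, ∑ v ∈ B, ν v ≤ ∑ w ∈ upSet B, t w := by
  generalize hn : ∑ v, ν v = n
  induction n using Nat.strong_induction_on generalizing ν τ with
  | _ n IH =>
  rcases Nat.eq_zero_or_pos n with rfl | hpos
  · refine ⟨0, fun v => Nat.zero_le _, by simp [hn], fun B => ?_⟩
    have hz : ∀ v ∈ B, ν v = 0 := by
      intro v hv
      have : ν v ≤ ∑ v, ν v := Finset.single_le_sum (fun _ _ => Nat.zero_le _) (mem_univ v)
      omega
    simp [Finset.sum_congr rfl hz]
  · have hex : ∃ a, 0 < ν a := by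
      by_contra hc
      push_neg at hc
      have : ∑ v, ν v = 0 := Finset.sum_eq_zero (fun v _ => Nat.le_zero.mp (hc v))
      omega
    obtain ⟨a, ha⟩ := hex
    have haU : ∀ B : Finset V, a ∈ B → ν a + ∑ v ∈ B \ {a}, ν v = ∑ v ∈ B, ν v := by
      intro B hB; have := sum_split ν hB; omega
    set Good : Finset V → Prop := fun U => upSet U = U ∧ ∑ w ∈ U, τ w = ∑ w ∈ U, ν w ∧ a ∉ U
      with hGood
    set U₀ : Finset V := (Finset.univ.powerset.filter Good).sup id with hU₀
    have hGoodU₀ : Good U₀ := by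
      rw [hU₀]
      apply Finset.sup_induction
      · refine ⟨?_, by simp, by simp⟩
        apply Finset.Subset.antisymm _ (subset_upSet _)
        intro w hw
        obtain ⟨v, hv, _⟩ := mem_upSet.mp hw
        exact absurd hv (Finset.notMem_empty v)
      · rintro U ⟨hU1, hU2, hU3⟩ W ⟨hW1, hW2, hW3⟩
        rw [show U ⊔ W = U ∪ W from rfl]
        have hUW1 : upSet (U ∪ W) = U ∪ W := by rw [upSet_union, hU1, hW1]
        have hint : upSet (U ∩ W) = U ∩ W := by
          apply Finset.Subset.antisymm _ (subset_upSet _)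
          intro w hw
          obtain ⟨v, hv, hle⟩ := mem_upSet.mp hw
          exact Finset.mem_inter.mpr ⟨upSet_eq_self_of_upper hU1 (Finset.mem_inter.mp hv).1 hle,
            upSet_eq_self_of_upper hW1 (Finset.mem_inter.mp hv).2 hle⟩
        have e1 : ∑ w ∈ U ∪ W, ν w ≤ ∑ w ∈ U ∪ W, τ w := by
          have := h (U ∪ W); rwa [hUW1] at this
        have e2 : ∑ w ∈ U ∩ W, ν w ≤ ∑ w ∈ U ∩ W, τ w := by
          have := h (U ∩ W); rwa [hint] at this
        have e3 : ∑ w ∈ U ∪ W, ν w + ∑ w ∈ U ∩ W, ν w = ∑ w ∈ U, ν w + ∑ w ∈ W, ν w :=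
          Finset.sum_union_inter
        have e4 : ∑ w ∈ U ∪ W, τ w + ∑ w ∈ U ∩ W, τ w = ∑ w ∈ U, τ w + ∑ w ∈ W, τ w :=
          Finset.sum_union_inter
        exact ⟨hUW1, by omega, by simp [hU3, hW3]⟩
      · rintro U hU
        exact (Finset.mem_filter.mp hU).2
    have hsubU₀ : ∀ U : Finset V, Good U → U ⊆ U₀ := by
      intro U hGU
      have : U ≤ U₀ := by
        rw [hU₀]
        exact Finset.le_sup (f := id) (Finset.mem_filter.mpr
          ⟨Finset.mem_powerset.mpr (Finset.subset_univ U), hGU⟩)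
      exact this
    have hb : ∃ b, a ≤ b ∧ 0 < τ b ∧ b ∉ U₀ := by
      by_contra hc
      push_neg at hc
      have key := h (insert a U₀)
      have hup : upSet (insert a U₀) = upSet {a} ∪ U₀ := by
        rw [Finset.insert_eq, upSet_union, hGoodU₀.1]
      have hzero : ∑ w ∈ upSet {a} \ U₀, τ w = 0 := by
        apply Finset.sum_eq_zero
        intro w hw
        obtain ⟨hw1, hw2⟩ := Finset.mem_sdiff.mp hw
        obtain ⟨v, hv, hle⟩ := mem_upSet.mp hw1
        rw [Finset.mem_singleton] at hv
        subst hv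
        by_contra hτw
        exact hw2 (hc w hle (Nat.pos_of_ne_zero hτw))
      have hcover : upSet {a} ∪ U₀ = U₀ ∪ (upSet {a} \ U₀) := by
        rw [Finset.union_comm U₀ _, Finset.sdiff_union_self_eq_union]
      have hd : Disjoint U₀ (upSet {a} \ U₀) := Finset.disjoint_sdiff
      have hτeq : ∑ w ∈ upSet (insert a U₀), τ w = ∑ w ∈ U₀, τ w := by
        rw [hup, hcover, Finset.sum_union hd, hzero, Nat.add_zero]
      rw [hτeq, Finset.sum_insert hGoodU₀.2.2, hGoodU₀.2.1] at key
      omega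
    obtain ⟨b, hab, hτb, hbU₀⟩ := hb
    have h' : ∀ B : Finset V, ∑ v ∈ B, Function.update ν a (ν a - 1) v
        ≤ ∑ w ∈ upSet B, Function.update τ b (τ b - 1) w := by
      intro B
      by_cases hbU : b ∈ upSet B
      · have k2 : ∑ w ∈ upSet B, Function.update τ b (τ b - 1) w
            = (τ b - 1) + ∑ w ∈ upSet B \ {b}, τ w := sum_update_eq τ _ hbU
        have k2' := sum_split τ hbU
        by_cases haB : a ∈ B
        · have k1 : ∑ v ∈ B, Function.update ν a (ν a - 1) v
              = (ν a - 1) + ∑ v ∈ B \ {a}, ν v := sum_update_eq ν _ haB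
          have k1' := sum_split ν haB
          have := h B
          omega
        · have k1 : ∑ v ∈ B, Function.update ν a (ν a - 1) v = ∑ v ∈ B, ν v :=
            sum_update_eq' ν _ haB
          have hstrict : ∑ v ∈ B, ν v < ∑ w ∈ upSet B, τ w := by
            by_cases haUp : a ∈ upSet B
            · have hBsub : B ⊆ upSet B \ {a} := by
                intro v hv
                exact Finset.mem_sdiff.mpr ⟨subset_upSet B hv,
                  by rw [Finset.mem_singleton]; exact fun hva => haB (hva ▸ hv)⟩
              have h1 : ∑ v ∈ B, ν v ≤ ∑ v ∈ upSet B \ {a}, ν v :=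
                Finset.sum_le_sum_of_subset hBsub
              have h2 := sum_split ν haUp
              have h3 : ∑ v ∈ upSet B, ν v ≤ ∑ w ∈ upSet B, τ w := by
                have := h (upSet B); rwa [upSet_idem] at this
              omega
            · have h3 : ∑ v ∈ upSet B, ν v ≤ ∑ w ∈ upSet B, τ w := by
                have := h (upSet B); rwa [upSet_idem] at this
              have hne : ∑ w ∈ upSet B, τ w ≠ ∑ w ∈ upSet B, ν w := by
                intro htight
                have hGU : Good (upSet B) := ⟨upSet_idem B, htight, haUp⟩
                exact hbU₀ (hsubU₀ _ hGU hbU)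
              have h4 : ∑ v ∈ B, ν v ≤ ∑ v ∈ upSet B, ν v :=
                Finset.sum_le_sum_of_subset (subset_upSet B)
              omega
          omega
      · have k2 : ∑ w ∈ upSet B, Function.update τ b (τ b - 1) w = ∑ w ∈ upSet B, τ w :=
          sum_update_eq' τ _ hbU
        have k1 : ∑ v ∈ B, Function.update ν a (ν a - 1) v ≤ ∑ v ∈ B, ν v := by
          by_cases haB : a ∈ B
          · have := sum_update_eq ν (ν a - 1) haB
            have := sum_split ν haB
            omega
          · have := sum_update_eq' ν (ν a - 1) haB
            omega
        have := h B
        omega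
    have hν'sum : ∑ v, Function.update ν a (ν a - 1) v = n - 1 := by
      rw [sum_update_eq ν _ (mem_univ a)]
      have := sum_split ν (mem_univ a)
      omega
    obtain ⟨t', ht'le, ht'sum, ht'con⟩ := IH (n - 1) (by omega)
      (Function.update ν a (ν a - 1)) (Function.update τ b (τ b - 1)) h' hν'sum
    refine ⟨Function.update t' b (t' b + 1), ?_, ?_, ?_⟩
    · intro w
      by_cases hwb : w = b
      · subst hwb
        rw [Function.update_self]
        have h1 := ht'le w
        rw [Function.update_self] at h1
        omega
      · rw [Function.update_of_ne hwb]
        have h1 := ht'le w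
        rwa [Function.update_of_ne hwb] at h1
    · rw [sum_update_eq t' _ (mem_univ b)]
      have h1 := sum_split t' (mem_univ b)
      omega
    · intro B
      have hcon := ht'con B
      by_cases hbU : b ∈ upSet B
      · have k2 : ∑ w ∈ upSet B, Function.update t' b (t' b + 1) w
            = (t' b + 1) + ∑ w ∈ upSet B \ {b}, t' w := sum_update_eq t' _ hbU
        have k2' := sum_split t' hbU
        by_cases haB : a ∈ B
        · have k1 : ∑ v ∈ B, Function.update ν a (ν a - 1) v
              = (ν a - 1) + ∑ v ∈ B \ {a}, ν v := sum_update_eq ν _ haB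
          have k1' := sum_split ν haB
          omega
        · have k1 : ∑ v ∈ B, Function.update ν a (ν a - 1) v = ∑ v ∈ B, ν v :=
            sum_update_eq' ν _ haB
          omega
      · have hab' : a ∉ B := by
          intro haB
          exact hbU (mem_upSet_of_le (subset_upSet B haB) hab)
        have k2 : ∑ w ∈ upSet B, Function.update t' b (t' b + 1) w = ∑ w ∈ upSet B, t' w :=
          sum_update_eq' t' _ hbU
        have k1 : ∑ v ∈ B, Function.update ν a (ν a - 1) v = ∑ v ∈ B, ν v :=
          sum_update_eq' ν _ hab'
        omega

end FiniteNat

section FiniteReal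

open Finset Filter Topology Set

open scoped Classical

variable {V : Type*} [Fintype V] [Preorder V] [DecidableEq V]

lemma natsub_cast_ge (m n : ℕ) : (m : ℝ) - n ≤ ((m - n : ℕ) : ℝ) := by
  rcases le_or_gt n m with h | h
  · rw [Nat.cast_sub h]
  · have h0 : m - n = 0 := Nat.sub_eq_zero_of_le h.le
    rw [h0]
    push_cast
    have : (m : ℝ) ≤ n := by exact_mod_cast h.le
    linarith

/-- The finite real-valued transport lemma. -/
theorem realTransport (ν τ : V → ℝ) (hν : ∀ v, 0 ≤ ν v) (hτ : ∀ v, 0 ≤ τ v)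
    (h : ∀ B : Finset V, ∑ v ∈ B, ν v ≤ ∑ w ∈ upSet B, τ w) :
    ∃ t : V → ℝ, (∀ v, 0 ≤ t v) ∧ (∀ v, t v ≤ τ v) ∧ (∑ v, t v = ∑ v, ν v) ∧
      ∀ B : Finset V, ∑ v ∈ B, ν v ≤ ∑ w ∈ upSet B, t w := by
  set A : ℕ := Fintype.card V with hA
  set C : ℝ := ((A : ℝ) + 1) * ((A : ℝ) + 2) with hC
  have hCnn : 0 ≤ C := by positivity
  have key : ∀ k : ℕ, ∃ s : V → ℝ, (∀ v, s v ∈ Icc 0 (τ v)) ∧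
      (∑ v, s v ≤ ∑ v, ν v) ∧
      ∀ B : Finset V, ∑ v ∈ B, ν v - C / ((k : ℝ) + 1) ≤ ∑ w ∈ upSet B, s w := by
    intro k
    have hk1 : (0 : ℝ) < (k : ℝ) + 1 := by positivity
    set nuk : V → ℕ := fun v => ⌊ν v * ((k : ℝ) + 1)⌋₊ - (A + 1) with hnuk
    set tauk : V → ℕ := fun v => ⌊τ v * ((k : ℝ) + 1)⌋₊ with htauk
    have bound1 : ∀ v, (nuk v : ℝ) ≤ ν v * ((k : ℝ) + 1) := by
      intro v
      calc (nuk v : ℝ) ≤ (⌊ν v * ((k : ℝ) + 1)⌋₊ : ℝ) :=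
            Nat.cast_le.mpr (Nat.sub_le _ _)
      _ ≤ ν v * ((k : ℝ) + 1) := Nat.floor_le (mul_nonneg (hν v) (by positivity))
    have bound1' : ∀ v, ν v * ((k : ℝ) + 1) - ((A : ℝ) + 2) ≤ (nuk v : ℝ) := by
      intro v
      have h1 : ν v * ((k : ℝ) + 1) - 1 < (⌊ν v * ((k : ℝ) + 1)⌋₊ : ℝ) :=
        Nat.sub_one_lt_floor _
      have h2 := natsub_cast_ge ⌊ν v * ((k : ℝ) + 1)⌋₊ (A + 1)
      push_cast at h2
      show ν v * ((k : ℝ) + 1) - ((A : ℝ) + 2) ≤ ((⌊ν v * ((k : ℝ) + 1)⌋₊ - (A + 1) : ℕ) : ℝ)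
      linarith
    have bound2 : ∀ v, τ v * ((k : ℝ) + 1) - 1 ≤ (tauk v : ℝ) :=
      fun v => (Nat.sub_one_lt_floor _).le
    have bound2' : ∀ v, (tauk v : ℝ) ≤ τ v * ((k : ℝ) + 1) :=
      fun v => Nat.floor_le (mul_nonneg (hτ v) (by positivity))
    have inv : ∀ B : Finset V, ∑ v ∈ B, nuk v ≤ ∑ w ∈ upSet B, tauk w := by
      intro B
      by_cases hex : ∃ v₀ ∈ B, 0 < nuk v₀
      · obtain ⟨v₀, hv₀B, hv₀⟩ := hex
        have hfloor_big : A + 1 ≤ ⌊ν v₀ * ((k : ℝ) + 1)⌋₊ := by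
          have hv₀' : 0 < ⌊ν v₀ * ((k : ℝ) + 1)⌋₊ - (A + 1) := hv₀
          omega
        have bv₀ : (nuk v₀ : ℝ) ≤ ν v₀ * ((k : ℝ) + 1) - ((A : ℝ) + 1) := by
          show ((⌊ν v₀ * ((k : ℝ) + 1)⌋₊ - (A + 1) : ℕ) : ℝ) ≤ ν v₀ * ((k : ℝ) + 1) - ((A : ℝ) + 1)
          rw [Nat.cast_sub hfloor_big]
          have := Nat.floor_le (mul_nonneg (hν v₀) (show (0:ℝ) ≤ (k : ℝ) + 1 by positivity))
          push_cast
          linarith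
        have hcast : (↑(∑ v ∈ B, nuk v) : ℝ) < (↑(∑ w ∈ upSet B, tauk w) : ℝ) := by
          push_cast
          have e1 : ∑ v ∈ B, (nuk v : ℝ) = ∑ v ∈ B \ {v₀}, (nuk v : ℝ) + (nuk v₀ : ℝ) :=
            Finset.sum_eq_sum_sdiff_singleton_add hv₀B _
          have e2 : ∑ v ∈ B \ {v₀}, (nuk v : ℝ) ≤ ∑ v ∈ B \ {v₀}, ν v * ((k : ℝ) + 1) :=
            Finset.sum_le_sum (fun v _ => bound1 v)
          have e3 : ∑ v ∈ B \ {v₀}, ν v * ((k : ℝ) + 1) + ν v₀ * ((k : ℝ) + 1)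
              = ∑ v ∈ B, ν v * ((k : ℝ) + 1) :=
            (Finset.sum_eq_sum_sdiff_singleton_add hv₀B _).symm
          have e4 : ∑ v ∈ B, ν v * ((k : ℝ) + 1) = (∑ v ∈ B, ν v) * ((k : ℝ) + 1) :=
            (Finset.sum_mul _ _ _).symm
          have e5 : ∑ w ∈ upSet B, (τ w * ((k : ℝ) + 1) - 1) ≤ ∑ w ∈ upSet B, (tauk w : ℝ) :=
            Finset.sum_le_sum (fun w _ => bound2 w)
          have e6 : ∑ w ∈ upSet B, (τ w * ((k : ℝ) + 1) - 1)
              = (∑ w ∈ upSet B, τ w) * ((k : ℝ) + 1) - (upSet B).card := by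
            rw [Finset.sum_sub_distrib, Finset.sum_mul, Finset.sum_const, nsmul_eq_mul, mul_one]
          have e7 : ((upSet B).card : ℝ) ≤ (A : ℝ) := by
            exact_mod_cast Finset.card_le_univ (upSet B)
          have e8 : (∑ v ∈ B, ν v) * ((k : ℝ) + 1) ≤ (∑ w ∈ upSet B, τ w) * ((k : ℝ) + 1) :=
            mul_le_mul_of_nonneg_right (h B) hk1.le
          linarith
        exact_mod_cast hcast.le
      · push_neg at hex
        have hz : ∑ v ∈ B, nuk v = 0 :=
          Finset.sum_eq_zero (fun v hv => Nat.le_zero.mp (hex v hv))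
        rw [hz]
        exact Nat.zero_le _
    obtain ⟨tk, htk_le, htk_sum, htk_con⟩ := natTransport nuk tauk inv
    refine ⟨fun v => (tk v : ℝ) / ((k : ℝ) + 1), ?_, ?_, ?_⟩
    · intro v
      constructor
      · positivity
      · rw [div_le_iff₀ hk1]
        calc (tk v : ℝ) ≤ (tauk v : ℝ) := by exact_mod_cast htk_le v
        _ ≤ τ v * ((k : ℝ) + 1) := bound2' v
    · have e0 : ∑ v, ((tk v : ℝ) / ((k : ℝ) + 1)) = (↑(∑ v, tk v) : ℝ) / ((k : ℝ) + 1) := by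
        rw [← Finset.sum_div]
        push_cast
        ring
      rw [e0, htk_sum]
      rw [div_le_iff₀ hk1]
      calc (↑(∑ v, nuk v) : ℝ) = ∑ v, (nuk v : ℝ) := by push_cast; ring
      _ ≤ ∑ v, ν v * ((k : ℝ) + 1) := Finset.sum_le_sum (fun v _ => bound1 v)
      _ = (∑ v, ν v) * ((k : ℝ) + 1) := (Finset.sum_mul _ _ _).symm
    · intro B
      have e0 : ∑ w ∈ upSet B, ((tk w : ℝ) / ((k : ℝ) + 1))
          = (↑(∑ w ∈ upSet B, tk w) : ℝ) / ((k : ℝ) + 1) := by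
        rw [← Finset.sum_div]
        push_cast
        ring
      rw [e0]
      rw [le_div_iff₀ hk1]
      have e1 : (↑(∑ v ∈ B, nuk v) : ℝ) ≤ (↑(∑ w ∈ upSet B, tk w) : ℝ) := by
        exact_mod_cast htk_con B
      have e2 : ∑ v ∈ B, (ν v * ((k : ℝ) + 1) - ((A : ℝ) + 2)) ≤ ∑ v ∈ B, (nuk v : ℝ) :=
        Finset.sum_le_sum (fun v _ => bound1' v)
      have e3 : ∑ v ∈ B, (ν v * ((k : ℝ) + 1) - ((A : ℝ) + 2))
          = (∑ v ∈ B, ν v) * ((k : ℝ) + 1) - B.card * ((A : ℝ) + 2) := by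
        rw [Finset.sum_sub_distrib, Finset.sum_mul, Finset.sum_const, nsmul_eq_mul]
      have e4 : (B.card : ℝ) ≤ (A : ℝ) := by exact_mod_cast Finset.card_le_univ B
      have e5 : (B.card : ℝ) * ((A : ℝ) + 2) ≤ C := by
        rw [hC]
        have : (0:ℝ) ≤ (A : ℝ) + 2 := by positivity
        nlinarith
      have e6 : C / ((k : ℝ) + 1) * ((k : ℝ) + 1) = C := by
        field_simp
      have e7 : (∑ v ∈ B, ν v - C / ((k : ℝ) + 1)) * ((k : ℝ) + 1)
          = (∑ v ∈ B, ν v) * ((k : ℝ) + 1) - C := by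
        rw [sub_mul, e6]
      rw [e7]
      have e1' : (↑(∑ w ∈ upSet B, tk w) : ℝ) = ∑ w ∈ upSet B, (tk w : ℝ) := by
        push_cast; ring
      push_cast at e1
      rw [e1']
      linarith
  choose s hs1 hs2 hs3 using key
  have hmem : ∀ k, s k ∈ Set.pi Set.univ (fun v => Icc 0 (τ v)) := by
    intro k
    rw [Set.mem_univ_pi]
    exact fun v => hs1 k v
  obtain ⟨t, htmem, φ, hφ, htend⟩ :=
    (isCompact_univ_pi (fun v : V => isCompact_Icc)).tendsto_subseq hmem
  have hcoord : ∀ v, Tendsto (fun k => s (φ k) v) atTop (𝓝 (t v)) := by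
    intro v
    exact (tendsto_pi_nhds.mp htend) v
  have hφtop : Tendsto φ atTop atTop := hφ.tendsto_atTop
  have hCtend : Tendsto (fun k : ℕ => C / ((φ k : ℝ) + 1)) atTop (𝓝 0) := by
    have h1 : Tendsto (fun n : ℕ => C / ((n : ℝ) + 1)) atTop (𝓝 0) := by
      apply Tendsto.div_atTop (tendsto_const_nhds)
      exact tendsto_atTop_add_const_right _ _ tendsto_natCast_atTop_atTop
    exact h1.comp hφtop
  have htmem' : ∀ v, t v ∈ Icc 0 (τ v) := by
    intro v
    exact htmem v (Set.mem_univ v)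
  refine ⟨t, fun v => (htmem' v).1, fun v => (htmem' v).2, ?_, ?_⟩
  · -- total mass
    have hsumtend : Tendsto (fun k => ∑ v, s (φ k) v) atTop (𝓝 (∑ v, t v)) :=
      tendsto_finset_sum _ (fun v _ => hcoord v)
    have hup : ∑ v, t v ≤ ∑ v, ν v :=
      le_of_tendsto hsumtend (Filter.Eventually.of_forall (fun k => hs2 (φ k)))
    have hlow : ∑ v, ν v ≤ ∑ v, t v := by
      have hb : Tendsto (fun k => ∑ v, ν v - C / ((φ k : ℝ) + 1)) atTop (𝓝 (∑ v, ν v - 0)) :=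
        Tendsto.sub tendsto_const_nhds hCtend
      rw [sub_zero] at hb
      refine le_of_tendsto_of_tendsto' hb hsumtend (fun k => ?_)
      have := hs3 (φ k) Finset.univ
      calc ∑ v, ν v - C / ((φ k : ℝ) + 1) ≤ ∑ w ∈ upSet Finset.univ, s (φ k) w := this
      _ = ∑ v, s (φ k) v := by
          congr 1
          apply Finset.Subset.antisymm (Finset.subset_univ _) (subset_upSet _)
    linarith
  · intro B
    have hsumtend : Tendsto (fun k => ∑ w ∈ upSet B, s (φ k) w) atTop
        (𝓝 (∑ w ∈ upSet B, t w)) :=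
      tendsto_finset_sum _ (fun v _ => hcoord v)
    have hb : Tendsto (fun k => ∑ v ∈ B, ν v - C / ((φ k : ℝ) + 1)) atTop
        (𝓝 (∑ v ∈ B, ν v - 0)) := Tendsto.sub tendsto_const_nhds hCtend
    rw [sub_zero] at hb
    exact le_of_tendsto_of_tendsto' hb hsumtend (fun k => hs3 (φ k) B)

end FiniteReal

section StageLemma

open MeasureTheory Filter Set Topology Finset

open scoped Classical ENNReal

noncomputable section

variable {α : Type*} [MeasurableSpace α] [Preorder α]

/-- Stage lemma: for finitely many upper-set constraints, there is a sub-measure of `τ`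
with total mass that of `ν₀` satisfying those constraints. -/
theorem stage_lemma (ρ τ ν₀ : Measure α) [IsFiniteMeasure τ]
    (hsd : StochDom ρ τ) (hle : ν₀ ≤ ρ)
    (F : Finset {I : Set α // MeasurableSet I ∧ IsUpperSet I}) :
    ∃ σ : Measure α, σ ≤ τ ∧ σ Set.univ = ν₀ Set.univ ∧
      ∀ c ∈ F, ν₀ c.1 ≤ σ c.1 := by
  classical
  have hρfin : ρ Set.univ ≠ ⊤ := by rw [hsd.1]; exact measure_ne_top τ _
  have hν₀fin : ∀ A : Set α, ν₀ A ≠ ⊤ := by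
    intro A
    exact ne_top_of_le_ne_top hρfin ((measure_mono (Set.subset_univ A)).trans (hle Set.univ))
  have hρfin' : ∀ A : Set α, ρ A ≠ ⊤ := by
    intro A
    exact ne_top_of_le_ne_top hρfin (measure_mono (Set.subset_univ A))
  set V := ({c // c ∈ F} → Bool) with hV
  set φ : α → V := fun s c => if s ∈ c.1.1 then true else false with hφ
  have mem_phi : ∀ (s : α) (c : {c // c ∈ F}), φ s c = true ↔ s ∈ c.1.1 := by
    intro s c
    rw [hφ]
    by_cases h : s ∈ c.1.1 <;> simp [h]
  have phi_mono : ∀ {s u : α}, s ≤ u → φ s ≤ φ u := by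
    intro s u hsu
    intro c
    by_cases h : φ s c = true
    · have : u ∈ c.1.1 := c.1.2.2 hsu ((mem_phi s c).mp h)
      rw [h, (mem_phi u c).mpr this]
    · rw [Bool.eq_false_iff.mpr h]
      exact Bool.false_le _
  set Atom : V → Set α := fun v => φ ⁻¹' {v} with hAtom
  have mem_Atom : ∀ (s : α) (v : V), s ∈ Atom v ↔ φ s = v := by
    intro s v
    rw [hAtom]
    simp [Set.mem_preimage]
  have hAtomMeas : ∀ v : V, MeasurableSet (Atom v) := by
    intro v
    have : Atom v = ⋂ c : {c // c ∈ F}, (if v c = true then c.1.1 else (c.1.1)ᶜ) := by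
      ext s
      rw [mem_Atom]
      simp only [Set.mem_iInter]
      constructor
      · intro hv c
        by_cases h : v c = true
        · rw [if_pos h]
          exact (mem_phi s c).mp (by rw [hv]; exact h)
        · rw [if_neg h]
          intro hs
          exact h (by rw [← hv]; exact (mem_phi s c).mpr hs)
      · intro hc
        funext c
        have := hc c
        by_cases h : v c = true
        · rw [if_pos h] at this
          rw [h]; exact (mem_phi s c).mpr this
        · rw [if_neg h] at this
          have h2 : ¬ (φ s c = true) := fun hh => this ((mem_phi s c).mp hh)
          rw [Bool.eq_false_iff.mpr h, Bool.eq_false_iff.mpr h2]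
    rw [this]
    refine MeasurableSet.iInter (fun c => ?_)
    by_cases h : v c = true
    · rw [if_pos h]; exact c.1.2.1
    · rw [if_neg h]; exact c.1.2.1.compl
  have hAtomDisj : ∀ (B : Finset V), (↑B : Set V).PairwiseDisjoint Atom := by
    intro B v _ w _ hvw
    rw [Function.onFun]
    rw [Set.disjoint_left]
    intro s hs1 hs2
    exact hvw (((mem_Atom s v).mp hs1).symm.trans ((mem_Atom s w).mp hs2))
  have hAtomUnion : ∀ B : Finset V, ∀ (μ : Measure α),
      μ (⋃ v ∈ B, Atom v) = ∑ v ∈ B, μ (Atom v) := by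
    intro B μ
    exact measure_biUnion_finset (hAtomDisj B) (fun v _ => hAtomMeas v)
  have hAtomCover : ⋃ v ∈ (Finset.univ : Finset V), Atom v = Set.univ := by
    apply Set.eq_univ_of_forall
    intro s
    simp only [Set.mem_iUnion]
    exact ⟨φ s, Finset.mem_univ _, (mem_Atom s (φ s)).mpr rfl⟩
  -- the union of atoms over an upSet is an upper measurable set
  have hUpperUnion : ∀ B : Finset V, IsUpperSet (⋃ v ∈ upSet B, Atom v) := by
    intro B
    intro s u hsu hs
    simp only [Set.mem_iUnion] at hs ⊢
    obtain ⟨v, hvB, hsv⟩ := hs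
    refine ⟨φ u, ?_, (mem_Atom u (φ u)).mpr rfl⟩
    have : v ≤ φ u := by
      rw [← (mem_Atom s v).mp hsv]
      exact phi_mono hsu
    exact mem_upSet_of_le hvB this
  have hMeasUnion : ∀ B : Finset V, MeasurableSet (⋃ v ∈ B, Atom v) :=
    fun B => (Finset.measurableSet_biUnion B (fun v _ => hAtomMeas v))
  -- real-valued data
  set nuh : V → ℝ := fun v => (ν₀ (Atom v)).toReal with hnuh
  set tauh : V → ℝ := fun v => (τ (Atom v)).toReal with htauh
  have hsum_nu : ∀ B : Finset V, ∑ v ∈ B, nuh v = (ν₀ (⋃ v ∈ B, Atom v)).toReal := by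
    intro B
    rw [hAtomUnion B ν₀, ENNReal.toReal_sum]
    intro v _
    exact hν₀fin _
  have hsum_tau : ∀ B : Finset V, ∑ v ∈ B, tauh v = (τ (⋃ v ∈ B, Atom v)).toReal := by
    intro B
    rw [hAtomUnion B τ, ENNReal.toReal_sum]
    intro v _
    exact measure_ne_top τ _
  have inv : ∀ B : Finset V, ∑ v ∈ B, nuh v ≤ ∑ w ∈ upSet B, tauh w := by
    intro B
    rw [hsum_nu, hsum_tau]
    apply ENNReal.toReal_mono (measure_ne_top τ _)
    calc ν₀ (⋃ v ∈ B, Atom v) ≤ ν₀ (⋃ v ∈ upSet B, Atom v) :=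
          measure_mono (Set.biUnion_subset_biUnion_left (subset_upSet B))
    _ ≤ ρ (⋃ v ∈ upSet B, Atom v) := hle _
    _ ≤ τ (⋃ v ∈ upSet B, Atom v) := hsd.2 _ (hMeasUnion _) (hUpperUnion B)
  obtain ⟨t, ht0, htτ, htsum, htcon⟩ := realTransport nuh tauh
    (fun v => ENNReal.toReal_nonneg) (fun v => ENNReal.toReal_nonneg) inv
  -- the density
  set g : α → ℝ≥0∞ := fun s =>
    ∑ v : V, (Atom v).indicator (fun _ => ENNReal.ofReal (t v) / τ (Atom v)) s with hg
  have hgmeas : Measurable g := by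
    apply Finset.measurable_sum
    intro v _
    exact Measurable.indicator measurable_const (hAtomMeas v)
  set σ : Measure α := τ.withDensity g with hσ
  have hσA : ∀ A : Set α, MeasurableSet A →
      σ A = ∑ v : V, (ENNReal.ofReal (t v) / τ (Atom v)) * τ (Atom v ∩ A) := by
    intro A hA
    rw [hσ, withDensity_apply g hA, hg]
    rw [lintegral_finset_sum _ (fun v _ => Measurable.indicator measurable_const (hAtomMeas v))]
    congr 1
    funext v
    rw [lintegral_indicator (hAtomMeas v)]
    rw [setLIntegral_const]
    rw [Measure.restrict_apply (hAtomMeas v)]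
  have hcv_le_one : ∀ v : V, ENNReal.ofReal (t v) ≤ τ (Atom v) := by
    intro v
    calc ENNReal.ofReal (t v) ≤ ENNReal.ofReal (tauh v) := ENNReal.ofReal_le_ofReal (htτ v)
    _ = τ (Atom v) := ENNReal.ofReal_toReal (measure_ne_top τ _)
  have hterm_le : ∀ (v : V) (A : Set α),
      (ENNReal.ofReal (t v) / τ (Atom v)) * τ (Atom v ∩ A) ≤ τ (Atom v ∩ A) := by
    intro v A
    by_cases h0 : τ (Atom v) = 0
    · have : τ (Atom v ∩ A) = 0 :=
        le_antisymm (le_trans (measure_mono (Set.inter_subset_left)) h0.le) (by simp)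
      rw [this, mul_zero]
    · have hc1 : ENNReal.ofReal (t v) / τ (Atom v) ≤ 1 := by
        rw [ENNReal.div_le_iff h0 (measure_ne_top τ _)]
        rw [one_mul]
        exact hcv_le_one v
      calc (ENNReal.ofReal (t v) / τ (Atom v)) * τ (Atom v ∩ A) ≤ 1 * τ (Atom v ∩ A) :=
            mul_le_mul_left hc1 _
      _ = τ (Atom v ∩ A) := one_mul _
  have hterm_full : ∀ v : V,
      (ENNReal.ofReal (t v) / τ (Atom v)) * τ (Atom v) = ENNReal.ofReal (t v) := by
    intro v
    by_cases h0 : τ (Atom v) = 0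
    · rw [h0, mul_zero]
      have h2 : tauh v = 0 := by show (τ (Atom v)).toReal = 0; simp [h0]
      have htv : t v = 0 := le_antisymm (h2 ▸ htτ v) (ht0 v)
      rw [htv]
      simp
    · rw [ENNReal.div_mul_cancel h0 (measure_ne_top τ _)]
  refine ⟨σ, ?_, ?_, ?_⟩
  · rw [Measure.le_iff]
    intro A hA
    rw [hσA A hA]
    calc ∑ v : V, (ENNReal.ofReal (t v) / τ (Atom v)) * τ (Atom v ∩ A)
        ≤ ∑ v : V, τ (Atom v ∩ A) := Finset.sum_le_sum (fun v _ => hterm_le v A)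
    _ = τ (⋃ v ∈ (Finset.univ : Finset V), (Atom v ∩ A)) := by
        rw [measure_biUnion_finset]
        · intro v _ w _ hvw
          rw [Function.onFun, Set.disjoint_left]
          intro s hs1 hs2
          exact hvw (((mem_Atom s v).mp hs1.1).symm.trans ((mem_Atom s w).mp hs2.1))
        · exact fun v _ => (hAtomMeas v).inter hA
    _ = τ A := by
        congr 1
        rw [← Set.iUnion₂_inter, hAtomCover, Set.univ_inter]
  · rw [hσA Set.univ MeasurableSet.univ]
    have e1 : ∀ v : V, Atom v ∩ Set.univ = Atom v := fun v => Set.inter_univ _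
    calc ∑ v : V, (ENNReal.ofReal (t v) / τ (Atom v)) * τ (Atom v ∩ Set.univ)
        = ∑ v : V, ENNReal.ofReal (t v) := by
          apply Finset.sum_congr rfl
          intro v _
          rw [e1 v, hterm_full v]
    _ = ENNReal.ofReal (∑ v : V, t v) := (ENNReal.ofReal_sum_of_nonneg (fun v _ => ht0 v)).symm
    _ = ENNReal.ofReal (∑ v : V, nuh v) := by rw [htsum]
    _ = ∑ v : V, ENNReal.ofReal (nuh v) := ENNReal.ofReal_sum_of_nonneg
          (fun v _ => ENNReal.toReal_nonneg)
    _ = ∑ v : V, ν₀ (Atom v) := by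
          apply Finset.sum_congr rfl
          intro v _
          exact ENNReal.ofReal_toReal (hν₀fin _)
    _ = ν₀ (⋃ v ∈ (Finset.univ : Finset V), Atom v) := (hAtomUnion Finset.univ ν₀).symm
    _ = ν₀ Set.univ := by rw [hAtomCover]
  · intro c hc
    set Uc : Finset V := Finset.univ.filter (fun v => v ⟨c, hc⟩ = true) with hUc
    have hIUc : c.1 = ⋃ v ∈ Uc, Atom v := by
      ext s
      simp only [Set.mem_iUnion]
      constructor
      · intro hs
        refine ⟨φ s, ?_, (mem_Atom s (φ s)).mpr rfl⟩
        rw [hUc]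
        exact Finset.mem_filter.mpr ⟨Finset.mem_univ _, (mem_phi s ⟨c, hc⟩).mpr hs⟩
      · rintro ⟨v, hv, hsv⟩
        have h1 : φ s = v := (mem_Atom s v).mp hsv
        have h2 : v ⟨c, hc⟩ = true := (Finset.mem_filter.mp hv).2
        exact (mem_phi s ⟨c, hc⟩).mp (by rw [h1]; exact h2)
    have hUcUpper : upSet Uc = Uc := by
      apply Finset.Subset.antisymm _ (subset_upSet _)
      intro w hw
      obtain ⟨v, hv, hle'⟩ := mem_upSet.mp hw
      have h2 : v ⟨c, hc⟩ = true := (Finset.mem_filter.mp hv).2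
      have h3 : w ⟨c, hc⟩ = true := by
        have := hle' ⟨c, hc⟩
        rw [h2] at this
        exact Bool.eq_true_of_true_le this
      exact Finset.mem_filter.mpr ⟨Finset.mem_univ _, h3⟩
    have hAtomSub : ∀ v ∈ Uc, Atom v ∩ c.1 = Atom v := by
      intro v hv
      apply Set.inter_eq_self_of_subset_left
      intro s hs
      rw [hIUc]
      simp only [Set.mem_iUnion]
      exact ⟨v, hv, hs⟩
    have hAtomDisj' : ∀ v ∉ Uc, Atom v ∩ c.1 = ∅ := by
      intro v hv
      ext s
      simp only [Set.mem_empty_iff_false, iff_false]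
      intro hs
      apply hv
      rw [hUc]
      refine Finset.mem_filter.mpr ⟨Finset.mem_univ _, ?_⟩
      have h1 : φ s = v := (mem_Atom s v).mp hs.1
      rw [← h1]
      exact (mem_phi s ⟨c, hc⟩).mpr hs.2
    rw [hσA c.1 c.2.1]
    have e2 : ∑ v : V, (ENNReal.ofReal (t v) / τ (Atom v)) * τ (Atom v ∩ c.1)
        = ∑ v ∈ Uc, ENNReal.ofReal (t v) := by
      rw [← Finset.sum_subset (Finset.subset_univ Uc)]
      · apply Finset.sum_congr rfl
        intro v hv
        rw [hAtomSub v hv, hterm_full v]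
      · intro v _ hv
        rw [hAtomDisj' v hv]
        simp
    rw [e2]
    have e3 : ν₀ c.1 = ENNReal.ofReal (∑ v ∈ Uc, nuh v) := by
      rw [hIUc, hAtomUnion Uc ν₀]
      rw [ENNReal.ofReal_sum_of_nonneg (fun v _ => ENNReal.toReal_nonneg)]
      apply Finset.sum_congr rfl
      intro v _
      exact (ENNReal.ofReal_toReal (hν₀fin _)).symm
    rw [e3]
    have e4 : ∑ v ∈ Uc, nuh v ≤ ∑ v ∈ Uc, t v := by
      have := htcon Uc
      rwa [hUcUpper] at this
    calc ENNReal.ofReal (∑ v ∈ Uc, nuh v) ≤ ENNReal.ofReal (∑ v ∈ Uc, t v) :=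
          ENNReal.ofReal_le_ofReal e4
    _ = ∑ v ∈ Uc, ENNReal.ofReal (t v) := ENNReal.ofReal_sum_of_nonneg (fun v _ => ht0 v)

end

end StageLemma

section LemmaD

open MeasureTheory Filter Set Topology Finset

open scoped Classical ENNReal

variable {α : Type*} [MeasurableSpace α] [Preorder α]

/-- Strassen-type decomposition: if `ρ` is stochastically dominated by `τ` and `ν₀ ≤ ρ`,
then some `τ' ≤ τ` stochastically dominates `ν₀` with equal mass. -/
theorem lemmaD (ρ τ ν₀ : Measure α) [IsFiniteMeasure τ]
    (hsd : StochDom ρ τ) (hle : ν₀ ≤ ρ) :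
    ∃ τ' : Measure α, τ' ≤ τ ∧ StochDom ν₀ τ' := by
  classical
  have hρfin : ρ Set.univ ≠ ⊤ := by rw [hsd.1]; exact measure_ne_top τ _
  have hν₀fin : ∀ A : Set α, ν₀ A ≠ ⊤ := fun A =>
    ne_top_of_le_ne_top hρfin ((measure_mono (Set.subset_univ A)).trans (hle Set.univ))
  obtain ⟨σ, hσle, hσmass, hσcon⟩ :
      ∃ σ : Finset {I : Set α // MeasurableSet I ∧ IsUpperSet I} → Measure α,
        (∀ F, σ F ≤ τ) ∧ (∀ F, σ F Set.univ = ν₀ Set.univ) ∧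
        (∀ F, ∀ c ∈ F, ν₀ c.1 ≤ σ F c.1) := by
    have h := stage_lemma ρ τ ν₀ hsd hle
    choose σ h1 h2 h3 using h
    exact ⟨σ, h1, h2, h3⟩
  have hσne : ∀ F A, σ F A ≠ ⊤ := fun F A => ne_top_of_le_ne_top (measure_ne_top τ A) (hσle F A)
  set L : Ultrafilter (Finset {I : Set α // MeasurableSet I ∧ IsUpperSet I}) :=
    Ultrafilter.of atTop with hL
  have hLatTop : (L : Filter (Finset {I : Set α // MeasurableSet I ∧ IsUpperSet I})) ≤ atTop :=
    Ultrafilter.of_le _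
  -- the limit values
  have hex : ∀ (A : Set α), MeasurableSet A → ∃ x, 0 ≤ x ∧ x ≤ (τ A).toReal ∧
      Tendsto (fun F => (σ F A).toReal)
        (L : Filter (Finset {I : Set α // MeasurableSet I ∧ IsUpperSet I})) (𝓝 x) := by
    intro A hA
    have hmem : ∀ F, (σ F A).toReal ∈ Icc (0 : ℝ) ((τ A).toReal) := by
      intro F
      exact ⟨ENNReal.toReal_nonneg, ENNReal.toReal_mono (measure_ne_top τ A) (hσle F A)⟩
    have hle' : (L.map (fun F => (σ F A).toReal) : Filter ℝ) ≤ 𝓟 (Icc 0 ((τ A).toReal)) := by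
      rw [Filter.le_principal_iff]
      exact Filter.mem_map.2 (Filter.Eventually.mono (Filter.Eventually.of_forall hmem)
        (fun F h => h))
    obtain ⟨x, hx, hfx⟩ := isCompact_Icc.ultrafilter_le_nhds
      (L.map (fun F => (σ F A).toReal)) hle'
    exact ⟨x, hx.1, hx.2, hfx⟩
  choose val hval0 hvalτ hvaltend using hex
  have huniq : ∀ (A : Set α) (hA : MeasurableSet A) (x : ℝ),
      Tendsto (fun F => (σ F A).toReal)
        (L : Filter (Finset {I : Set α // MeasurableSet I ∧ IsUpperSet I})) (𝓝 x) →
        val A hA = x := by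
    intro A hA x hx
    exact tendsto_nhds_unique (hvaltend A hA) hx
  have hcongr : ∀ (A B : Set α) (hA : MeasurableSet A) (hB : MeasurableSet B),
      A = B → val A hA = val B hB := by
    intro A B hA hB h
    subst h
    rfl
  -- additivity
  have hadd : ∀ (A B : Set α) (hA : MeasurableSet A) (hB : MeasurableSet B),
      Disjoint A B → val (A ∪ B) (hA.union hB) = val A hA + val B hB := by
    intro A B hA hB hd
    apply huniq
    have hstage : ∀ F, (σ F (A ∪ B)).toReal = (σ F A).toReal + (σ F B).toReal := by
      intro F
      rw [measure_union hd hB, ENNReal.toReal_add (hσne F A) (hσne F B)]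
    have := Tendsto.add (hvaltend A hA) (hvaltend B hB)
    apply Tendsto.congr' _ this
    exact Filter.Eventually.of_forall (fun F => (hstage F).symm)
  have hempty : val ∅ MeasurableSet.empty = 0 := by
    apply huniq
    have : ∀ F, (σ F (∅ : Set α)).toReal = 0 := by
      intro F; rw [measure_empty]; simp
    apply Tendsto.congr' (Filter.Eventually.of_forall (fun F => (this F).symm))
    exact tendsto_const_nhds
  have hmassval : val Set.univ MeasurableSet.univ = (ν₀ Set.univ).toReal := by
    apply huniq
    have : ∀ F, (σ F Set.univ).toReal = (ν₀ Set.univ).toReal := fun F => by rw [hσmass F]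
    apply Tendsto.congr' (Filter.Eventually.of_forall (fun F => (this F).symm))
    exact tendsto_const_nhds
  have hconval : ∀ (I : Set α) (hI : MeasurableSet I), IsUpperSet I →
      (ν₀ I).toReal ≤ val I hI := by
    intro I hI hU
    refine ge_of_tendsto (hvaltend I hI) ?_
    have hev : ∀ᶠ F in (atTop : Filter (Finset {I : Set α // MeasurableSet I ∧ IsUpperSet I})),
        (ν₀ I).toReal ≤ (σ F I).toReal := by
      rw [eventually_atTop]
      refine ⟨{⟨I, hI, hU⟩}, fun F hF => ?_⟩
      have hc : (⟨I, hI, hU⟩ : {I : Set α // MeasurableSet I ∧ IsUpperSet I}) ∈ F :=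
        Finset.singleton_subset_iff.mp hF
      exact (ENNReal.toReal_le_toReal (hν₀fin I) (hσne F I)).mpr (hσcon F _ hc)
    exact hev.filter_mono hLatTop
  -- countable additivity
  have hfin_add : ∀ (f : ℕ → Set α) (hf : ∀ i, MeasurableSet (f i)),
      Pairwise (Function.onFun Disjoint f) → ∀ n : ℕ,
      val (⋃ i ∈ Finset.range n, f i) (Finset.measurableSet_biUnion _ (fun i _ => hf i))
        = ∑ i ∈ Finset.range n, val (f i) (hf i) := by
    intro f hf hd n
    induction n with
    | zero =>
      simp only [Finset.range_zero, Finset.sum_empty]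
      apply huniq
      have he : (⋃ i ∈ Finset.range 0, f i) = (∅ : Set α) := by simp
      have hz : ∀ F, (σ F (⋃ i ∈ Finset.range 0, f i)).toReal = 0 := by
        intro F; rw [he, measure_empty]; simp
      apply Tendsto.congr' (Filter.Eventually.of_forall (fun F => (hz F).symm))
      exact tendsto_const_nhds
    | succ n ih =>
      have hKn : MeasurableSet (⋃ i ∈ Finset.range n, f i) :=
        Finset.measurableSet_biUnion _ (fun i _ => hf i)
      have hsucc : (⋃ i ∈ Finset.range (n+1), f i)
          = (⋃ i ∈ Finset.range n, f i) ∪ f n := by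
        rw [Finset.range_add_one]
        rw [Finset.set_biUnion_insert]
        rw [Set.union_comm]
      have hdisj : Disjoint (⋃ i ∈ Finset.range n, f i) (f n) := by
        rw [Set.disjoint_left]
        intro x hx hxn
        simp only [Set.mem_iUnion] at hx
        obtain ⟨i, hi, hxi⟩ := hx
        have hine : i ≠ n := Nat.ne_of_lt (Finset.mem_range.mp hi)
        exact (Set.disjoint_left.mp (hd hine)) hxi hxn
      have e := hadd _ _ hKn (hf n) hdisj
      have heq : val (⋃ i ∈ Finset.range (n+1), f i)
          (Finset.measurableSet_biUnion _ (fun i _ => hf i))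
          = val ((⋃ i ∈ Finset.range n, f i) ∪ f n) (hKn.union (hf n)) :=
        hcongr _ _ _ _ hsucc
      rw [heq, e, ih, Finset.sum_range_succ]
  have hctble : ∀ (f : ℕ → Set α) (hf : ∀ i, MeasurableSet (f i)),
      Pairwise (Function.onFun Disjoint f) →
      HasSum (fun i => val (f i) (hf i)) (val (⋃ i, f i) (MeasurableSet.iUnion hf)) := by
    intro f hf hd
    rw [hasSum_iff_tendsto_nat_of_nonneg (fun i => hval0 _ (hf i))]
    -- remainders
    set K : ℕ → Set α := fun n => ⋃ i ∈ Finset.range n, f i with hK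
    set R : ℕ → Set α := fun n => (⋃ i, f i) \ K n with hR
    have hKmeas : ∀ n, MeasurableSet (K n) := fun n =>
      Finset.measurableSet_biUnion _ (fun i _ => hf i)
    have hRmeas : ∀ n, MeasurableSet (R n) := fun n => (MeasurableSet.iUnion hf).diff (hKmeas n)
    have hsplit : ∀ n : ℕ, val (⋃ i, f i) (MeasurableSet.iUnion hf)
        = ∑ i ∈ Finset.range n, val (f i) (hf i) + val (R n) (hRmeas n) := by
      intro n
      have hKsub : K n ⊆ ⋃ i, f i := by
        intro x hx
        simp only [hK, Set.mem_iUnion] at hx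
        obtain ⟨i, _, hxi⟩ := hx
        exact Set.mem_iUnion.mpr ⟨i, hxi⟩
      have hcup : (⋃ i, f i) = K n ∪ R n := by
        rw [hR]
        rw [Set.union_diff_cancel hKsub]
      have hdisj : Disjoint (K n) (R n) := Set.disjoint_sdiff_right
      have e := hadd (K n) (R n) (hKmeas n) (hRmeas n) hdisj
      have e2 : val (⋃ i, f i) (MeasurableSet.iUnion hf)
          = val (K n ∪ R n) ((hKmeas n).union (hRmeas n)) :=
        hcongr _ _ _ _ hcup
      rw [e2, e, hfin_add f hf hd n]
    have hRtend : Tendsto (fun n => val (R n) (hRmeas n)) atTop (𝓝 0) := by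
      have hbound : ∀ n, val (R n) (hRmeas n) ≤ (τ (R n)).toReal := fun n => hvalτ _ _
      have hlow : ∀ n, 0 ≤ val (R n) (hRmeas n) := fun n => hval0 _ _
      have hRanti : Antitone R := by
        intro m n hmn
        apply Set.diff_subset_diff_right
        intro x hx
        simp only [hK, Set.mem_iUnion] at hx ⊢
        obtain ⟨i, hi, hxi⟩ := hx
        exact ⟨i, Finset.mem_range.mpr (lt_of_lt_of_le (Finset.mem_range.mp hi) hmn), hxi⟩
      have hRempty : ⋂ n, R n = ∅ := by
        ext x
        simp only [Set.mem_iInter, Set.mem_empty_iff_false, iff_false]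
        intro hx
        obtain ⟨i₀, hxi₀⟩ := Set.mem_iUnion.mp (hx 0).1
        have := (hx (i₀ + 1)).2
        apply this
        simp only [hK, Set.mem_iUnion]
        exact ⟨i₀, Finset.mem_range.mpr (Nat.lt_succ_self i₀), hxi₀⟩
      have hτtend : Tendsto (fun n => τ (R n)) atTop (𝓝 0) := by
        have := tendsto_measure_iInter_atTop (μ := τ)
          (fun n => (hRmeas n).nullMeasurableSet) hRanti ⟨0, measure_ne_top τ _⟩
        rw [hRempty] at this
        simpa [Function.comp_def] using this
      have hτtoReal : Tendsto (fun n => (τ (R n)).toReal) atTop (𝓝 0) := by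
        have h0 : (0 : ℝ≥0∞) ≠ ⊤ := by simp
        have := (ENNReal.tendsto_toReal h0).comp hτtend
        exact this
      exact squeeze_zero hlow hbound hτtoReal
    have h1 : Tendsto (fun n => val (⋃ i, f i) (MeasurableSet.iUnion hf) - val (R n) (hRmeas n))
        atTop (𝓝 (val (⋃ i, f i) (MeasurableSet.iUnion hf) - 0)) :=
      Tendsto.sub tendsto_const_nhds hRtend
    have h2 : Tendsto (fun n => ∑ i ∈ Finset.range n, val (f i) (hf i)) atTop
        (𝓝 (val (⋃ i, f i) (MeasurableSet.iUnion hf) - 0)) := by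
      apply Tendsto.congr _ h1
      intro n
      have := hsplit n
      linarith
    simpa using h2
  -- build the measure
  set m : ∀ A : Set α, MeasurableSet A → ℝ≥0∞ :=
    fun A hA => ENNReal.ofReal (val A hA) with hm
  have hm0 : m ∅ MeasurableSet.empty = 0 := by rw [hm]; simp [hempty]
  have hmU : ∀ ⦃f : ℕ → Set α⦄ (h : ∀ i, MeasurableSet (f i)),
      Pairwise (Function.onFun Disjoint f) →
      m (⋃ i, f i) (MeasurableSet.iUnion h) = ∑' i, m (f i) (h i) := by
    intro f hf hd
    have hs := hctble f hf hd
    show ENNReal.ofReal (val (⋃ i, f i) (MeasurableSet.iUnion hf))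
        = ∑' i, ENNReal.ofReal (val (f i) (hf i))
    have e1 : ENNReal.ofReal (val (⋃ i, f i) (MeasurableSet.iUnion hf))
        = ENNReal.ofReal (∑' i, val (f i) (hf i)) := by rw [hs.tsum_eq]
    rw [e1, ENNReal.ofReal_tsum_of_nonneg (fun i => hval0 _ (hf i)) hs.summable]
  set τ' : Measure α := Measure.ofMeasurable m hm0 hmU with hτ'
  have hτ'app : ∀ (A : Set α) (hA : MeasurableSet A), τ' A = ENNReal.ofReal (val A hA) := by
    intro A hA
    rw [hτ']
    exact Measure.ofMeasurable_apply A hA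
  refine ⟨τ', ?_, ?_, ?_⟩
  · rw [Measure.le_iff]
    intro A hA
    rw [hτ'app A hA]
    calc ENNReal.ofReal (val A hA) ≤ ENNReal.ofReal ((τ A).toReal) :=
          ENNReal.ofReal_le_ofReal (hvalτ A hA)
    _ = τ A := ENNReal.ofReal_toReal (measure_ne_top τ A)
  · rw [hτ'app Set.univ MeasurableSet.univ, hmassval,
      ENNReal.ofReal_toReal (hν₀fin Set.univ)]
  · intro I hI hU
    rw [hτ'app I hI]
    calc ν₀ I = ENNReal.ofReal ((ν₀ I).toReal) := (ENNReal.ofReal_toReal (hν₀fin I)).symm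
    _ ≤ ENNReal.ofReal (val I hI) := ENNReal.ofReal_le_ofReal (hconval I hI hU)

end LemmaD

section Dirac

open MeasureTheory Set

variable {α : Type*} [MeasurableSpace α] [Preorder α]

lemma stochDom_dirac {a b : α} (h : a ≤ b) : StochDom (Measure.dirac a) (Measure.dirac b) := by
  constructor
  · simp
  · intro I hmI hI
    rw [Measure.dirac_apply' a hmI, Measure.dirac_apply' b hmI]
    by_cases ha : a ∈ I
    · have hb : b ∈ I := hI h ha
      simp [ha, hb]
    · simp [ha]

lemma alphaO_dirac_eq_one {a b : α} (h : a ≤ b) :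
    alphaO (Measure.dirac a) (Measure.dirac b) = 1 :=
  alphaO_eq_one_of_stochDom (stochDom_dirac h)

lemma alphaO_dirac_eq_zero {a b : α} (h : ¬ a ≤ b) (hIci : MeasurableSet (Set.Ici a)) :
    alphaO (Measure.dirac a) (Measure.dirac b) = 0 := by
  refine le_antisymm ?_ (alphaO_nonneg _)
  have hu : IsUpperSet (Set.Ici a) := isUpperSet_Ici a
  have := alphaO_le_of_upperSet (μ := Measure.dirac a) (ν := Measure.dirac b) hIci hu
  have e1 : Measure.dirac b (Set.Ici a) = 0 := by
    rw [Measure.dirac_apply' b hIci]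
    simp [Set.indicator]
    intro hab
    exact h hab
  have e2 : Measure.dirac a ((Set.Ici a)ᶜ) = 0 := by
    rw [Measure.dirac_apply' a hIci.compl]
    simp [Set.indicator]
  rw [e1, e2] at this
  simpa using this

end Dirac


section Main

open MeasureTheory Set

theorem gammaO_contraction_coefficient_sharp'
    (P : S → Measure S) (hPmeas : Measurable P)
    (hPprob : ∀ x, IsProbabilityMeasure (P x))
    (hPmono : ∀ x y : S, x ≤ y → StochDom (P x) (P y))
    (hnt : ∃ x y : S, x ≠ y)
    (hlb : ∀ x y : S, ∃ z : S, z ≤ x ∧ z ≤ y) :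
    ∀ ξ : ℝ, sInf {r : ℝ | ∃ x y : S, r = alphaO (P x) (P y)} < ξ →
      ∃ μ ν : Measure S, IsProbabilityMeasure μ ∧ IsProbabilityMeasure ν ∧
        (1 - ξ) * gammaO μ ν < gammaO (μ.bind P) (ν.bind P) := by
  intro ξ hξ
  haveI : ∀ x : S, IsFiniteMeasure (P x) := fun x => by
    haveI := hPprob x; infer_instance
  have hIci : ∀ a : S, MeasurableSet (Set.Ici a) := fun a => isClosed_Ici.measurableSet
  -- extract a witness pair
  have hne : {r : ℝ | ∃ x y : S, r = alphaO (P x) (P y)}.Nonempty := by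
    obtain ⟨x₀⟩ := (inferInstance : Nonempty S)
    exact ⟨alphaO (P x₀) (P x₀), x₀, x₀, rfl⟩
  have hbdd : BddBelow {r : ℝ | ∃ x y : S, r = alphaO (P x) (P y)} := by
    refine ⟨0, fun r hr => ?_⟩
    obtain ⟨x, y, rfl⟩ := hr
    exact alphaO_nonneg _
  obtain ⟨r, hrmem, hrlt⟩ := (csInf_lt_iff hbdd hne).mp hξ
  obtain ⟨x, y, rfl⟩ := hrmem
  have hkey : ∀ a b : S, StochDom (P b) (P a) → ∀ c : S,
      alphaO (P c) (P b) ≤ alphaO (P c) (P a) := by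
    intro a b hsd c
    apply alphaO_mono_right
    intro ν' hν' μ' hμ'
    obtain ⟨τ', hτ'le, hτ'dom⟩ := lemmaD (P b) (P a) ν' hsd hν'
    refine ⟨τ', hτ'le, ?_, ?_⟩
    · rw [hμ'.1, hτ'dom.1]
    · intro I hmI hI
      exact le_trans (hμ'.2 I hmI hI) (hτ'dom.2 I hmI hI)
  by_cases hξ1 : 1 < ξ
  · -- trivial regime: any two distinct points work
    obtain ⟨a, b, hab⟩ := hnt
    refine ⟨Measure.dirac a, Measure.dirac b, inferInstance, inferInstance, ?_⟩
    rw [Measure.dirac_bind hPmeas, Measure.dirac_bind hPmeas]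
    have hγbase : 1 ≤ gammaO (Measure.dirac a) (Measure.dirac b) := by
      unfold gammaO
      by_cases h1 : a ≤ b
      · have h2 : ¬ b ≤ a := fun h2 => hab (le_antisymm h1 h2)
        rw [alphaO_dirac_eq_zero h2 (hIci b)]
        have := alphaO_le_one (μ := Measure.dirac a) (Measure.dirac b)
        linarith only [this]
      · rw [alphaO_dirac_eq_zero h1 (hIci a)]
        have := alphaO_le_one (μ := Measure.dirac b) (Measure.dirac a)
        linarith only [this]
    have hγP : 0 ≤ gammaO (P a) (P b) := by
      unfold gammaO
      have h1 := alphaO_le_one (μ := P a) (P b)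
      have h2 := alphaO_le_one (μ := P b) (P a)
      linarith only [h1, h2]
    have : (1 - ξ) * gammaO (Measure.dirac a) (Measure.dirac b) < 0 :=
      mul_neg_of_neg_of_pos (by linarith only [hξ1]) (by linarith only [hγbase])
    linarith only [this, hγP]
  · push_neg at hξ1
    have hnotle : ¬ x ≤ y := by
      intro h
      have := alphaO_eq_one_of_stochDom (hPmono x y h)
      rw [this] at hrlt
      linarith only [hrlt, hξ1]
    by_cases hyx : y ≤ x
    · refine ⟨Measure.dirac x, Measure.dirac y, inferInstance, inferInstance, ?_⟩
      rw [Measure.dirac_bind hPmeas, Measure.dirac_bind hPmeas]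
      have e1 : gammaO (Measure.dirac x) (Measure.dirac y) = 1 := by
        unfold gammaO
        rw [alphaO_dirac_eq_zero hnotle (hIci x), alphaO_dirac_eq_one hyx]
        ring
      have e2 : alphaO (P y) (P x) = 1 := alphaO_eq_one_of_stochDom (hPmono y x hyx)
      rw [e1]
      unfold gammaO
      rw [e2]
      linarith only [hrlt]
    · obtain ⟨z, hzx, hzy⟩ := hlb x y
      have hxz : ¬ x ≤ z := fun h => hnotle (h.trans hzy)
      refine ⟨Measure.dirac x, Measure.dirac z, inferInstance, inferInstance, ?_⟩
      rw [Measure.dirac_bind hPmeas, Measure.dirac_bind hPmeas]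
      have e1 : gammaO (Measure.dirac x) (Measure.dirac z) = 1 := by
        unfold gammaO
        rw [alphaO_dirac_eq_zero hxz (hIci x), alphaO_dirac_eq_one hzx]
        ring
      have e2 : alphaO (P z) (P x) = 1 := alphaO_eq_one_of_stochDom (hPmono z x hzx)
      have e3 : alphaO (P x) (P z) ≤ alphaO (P x) (P y) :=
        hkey y z (hPmono z y hzy) x
      rw [e1]
      unfold gammaO
      rw [e2]
      linarith only [e3, hrlt]

end Main

/-- The contraction coefficient in the bound cannot be improved. -/
theorem gammaO_contraction_coefficient_sharp
    (P : S → Measure S) (hPmeas : Measurable P)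
    (hPprob : ∀ x, IsProbabilityMeasure (P x))
    (hPmono : ∀ x y : S, x ≤ y → StochDom (P x) (P y))
    (hnt : ∃ x y : S, x ≠ y)
    (hlb : ∀ x y : S, ∃ z : S, z ≤ x ∧ z ≤ y) :
    ∀ ξ : ℝ, sInf {r : ℝ | ∃ x y : S, r = alphaO (P x) (P y)} < ξ →
      ∃ μ ν : Measure S, IsProbabilityMeasure μ ∧ IsProbabilityMeasure ν ∧
        (1 - ξ) * gammaO μ ν < gammaO (μ.bind P) (ν.bind P) :=
  gammaO_contraction_coefficient_sharp' P hPmeas hPprob hPmono hnt hlb
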